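/- arXiv:1703.08103 — 6 statements merged into one kernel-verified Lean document; each statement's English description precedes it below -/
import Mathlib

section
/- Every nonnegative, nontrivial C² solution u of u'' + 2λ u ln u = 0 on ℝ with u(±∞) = 0 is a translate of the Gaussian φ(x) = e^{1/2} e^{-λx²/2}; that is, there exists x₀ ∈ ℝ such that u(x) = exp(1/2 − λ(x−x₀)²/2) for all x. -/
/-!
The energy `u'² / 2 + λ u² (log u - 1 / 2)` is conserved, and it vanishes because `u → 0` at `+∞`:
otherwise `|u'|` would stay bounded away from `0`. Hence `u'² = λ u² (1 - 2 log u)`, which together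
with the equation gives `(u' / u)' = -λ` wherever `u ≠ 0`, so `log |u|` is a concave parabola on
every interval avoiding the zeros of `u`. Such a parabola is bounded at finite endpoints, so `u`
has no zeros at all; `log u` is then a global parabola, and the vanishing energy makes its maximum
`1 / 2`.
-/

open Filter Set Topology Real

theorem hasDerivAt_sq_mul_log_sub_half (y : ℝ) :
    HasDerivAt (fun t : ℝ => t ^ 2 * (log t - 1 / 2)) (2 * y * log y) y := by
  rcases eq_or_ne y 0 with rfl | hy
  · -- the slope at `0` is `t log t - t / 2`, which tends to `0`
    rw [hasDerivAt_iff_tendsto_slope, mul_zero, zero_mul]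
    have hslope : Tendsto (fun t : ℝ => t * log t - t / 2) (𝓝[≠] 0) (𝓝 0) := by
      have hc : Continuous fun t : ℝ => t * log t - t / 2 :=
        continuous_mul_log.sub (continuous_id.div_const 2)
      simpa using (hc.tendsto 0).mono_left nhdsWithin_le_nhds
    refine hslope.congr' (eventually_nhdsWithin_of_forall fun t (ht : t ≠ 0) => ?_)
    rw [slope_def_field]
    field_simp
    ring
  · refine ((hasDerivAt_pow 2 y).mul ((hasDerivAt_log hy).sub_const (1 / 2))).congr_deriv ?_
    field_simp
    ring

theorem eq_zero_of_tendsto_deriv_sq {f : ℝ → ℝ} {a l : ℝ} (hf : Differentiable ℝ f)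
    (hfa : Tendsto f atTop (𝓝 a)) (hl : Tendsto (fun x => deriv f x ^ 2) atTop (𝓝 l)) :
    l = 0 := by
  have hl0 : 0 ≤ l := ge_of_tendsto' hl fun x => sq_nonneg _
  -- `f (x + 1) - f x → 0`, but by the mean value theorem it is a value of `deriv f` on `(x, x + 1)`
  by_contra hne
  have hpos : 0 < l / 2 := by positivity
  have hdiff : Tendsto (fun x => (f (x + 1) - f x) ^ 2) atTop (𝓝 0) := by
    have := ((hfa.comp (tendsto_atTop_add_const_right _ 1 tendsto_id)).sub hfa).pow 2
    simpa using this
  obtain ⟨X, hX⟩ := eventually_atTop.mp (hl.eventually (lt_mem_nhds (half_lt_self_iff.mpr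
    (lt_of_le_of_ne hl0 (Ne.symm hne)))))
  obtain ⟨Y, hY⟩ := eventually_atTop.mp (hdiff.eventually (gt_mem_nhds hpos))
  obtain ⟨ξ, hξ, hslope⟩ := exists_hasDerivAt_eq_slope f (deriv f) (lt_add_one (max X Y))
    (hf.continuous.continuousOn) fun x _ => (hf x).hasDerivAt
  rw [add_sub_cancel_left, div_one] at hslope
  have h1 := hX ξ ((le_max_left X Y).trans hξ.1.le)
  have h2 := hY (max X Y) (le_max_right X Y)
  rw [hslope] at h1
  linarith

theorem IsOpen.exists_eq_quadratic_of_hasDerivAt {s : Set ℝ} (hs : IsOpen s)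
    (hs' : IsPreconnected s) {f f' : ℝ → ℝ} {a : ℝ} (hf : ∀ x ∈ s, HasDerivAt f (f' x) x)
    (hf' : ∀ x ∈ s, HasDerivAt f' a x) :
    ∃ b c, ∀ x ∈ s, f' x = a * x + b ∧ f x = a / 2 * x ^ 2 + b * x + c := by
  have hlin (b x : ℝ) : HasDerivAt (fun x => a * x + b) a x := by
    simpa using ((hasDerivAt_id x).const_mul a).add_const b
  have hquad (b x : ℝ) : HasDerivAt (fun x => a / 2 * x ^ 2 + b * x) (a * x + b) x := by
    refine (((hasDerivAt_pow 2 x).const_mul (a / 2)).add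
      ((hasDerivAt_id x).const_mul b)).congr_deriv ?_
    ring
  obtain ⟨b, hb⟩ := hs.exists_eq_add_of_deriv_eq hs'
    (fun x hx => (hf' x hx).differentiableAt.differentiableWithinAt)
    (fun x _ => (hlin 0 x).differentiableAt.differentiableWithinAt)
    (fun x hx => by simp only [(hf' x hx).deriv, (hlin 0 x).deriv])
  obtain ⟨c, hc⟩ := hs.exists_eq_add_of_deriv_eq hs'
    (fun x hx => (hf x hx).differentiableAt.differentiableWithinAt)
    (fun x _ => (hquad b x).differentiableAt.differentiableWithinAt)
    (fun x hx => by simp only [(hf x hx).deriv, (hquad b x).deriv, hb hx, add_zero])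
  exact ⟨b, c, fun x hx => ⟨by simpa using hb hx, hc hx⟩⟩

theorem IsClosed.exists_Ioo_subset_compl {s : Set ℝ} (hs : IsClosed s) {a b : ℝ} (ha : a ∈ s)
    (hb : b ∉ s) : ∃ c d, c < d ∧ (c ∈ s ∨ d ∈ s) ∧ Ioo c d ⊆ sᶜ := by
  wlog hab : a < b generalizing s a b
  · obtain ⟨c, d, hcd, hmem, hsub⟩ := this hs.neg (a := -a) (b := -b) (by simpa using ha)
      (by simpa using hb) (by linarith [lt_of_le_of_ne (not_lt.mp hab) (fun h => hb (h ▸ ha))])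
    refine ⟨-d, -c, neg_lt_neg hcd, by simpa [or_comm] using hmem, fun x hx => ?_⟩
    simpa using hsub (show -x ∈ Ioo c d from ⟨by linarith [hx.2], by linarith [hx.1]⟩)
  have hne : (s ∩ Icc a b).Nonempty := ⟨a, ha, le_rfl, hab.le⟩
  have hbdd : BddAbove (s ∩ Icc a b) := bddAbove_Icc.mono inter_subset_right
  obtain ⟨hcs, -, hcb⟩ := (hs.inter isClosed_Icc).csSup_mem hne hbdd
  refine ⟨sSup (s ∩ Icc a b), b, lt_of_le_of_ne hcb (fun h => hb (h ▸ hcs)), Or.inl hcs,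
    fun x hx hxs => ?_⟩
  have hax : a ≤ x := (le_csSup hbdd ⟨ha, le_rfl, hab.le⟩).trans hx.1.le
  exact (le_csSup hbdd ⟨hxs, hax, hx.2.le⟩).not_gt hx.1

section LogarithmicODE

variable {lam : ℝ} {u : ℝ → ℝ}

/-- The first integral of `u'' + 2 λ u log u = 0`. -/
noncomputable def energy (lam : ℝ) (u : ℝ → ℝ) (x : ℝ) : ℝ :=
  deriv u x ^ 2 / 2 + lam * (u x ^ 2 * (log (u x) - 1 / 2))

theorem hasDerivAt_energy (hu : Differentiable ℝ u) (hu' : Differentiable ℝ (deriv u))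
    (heq : ∀ x, deriv (deriv u) x + 2 * lam * u x * log (u x) = 0) (x : ℝ) :
    HasDerivAt (energy lam u) 0 x := by
  have hkin := ((hu' x).hasDerivAt.pow 2).div_const 2
  have hpot := ((hasDerivAt_sq_mul_log_sub_half (u x)).comp x (hu x).hasDerivAt).const_mul lam
  refine (hkin.add hpot).congr_deriv ?_
  linear_combination deriv u x * heq x

theorem energy_eq_zero (hu : Differentiable ℝ u) (hu' : Differentiable ℝ (deriv u))
    (heq : ∀ x, deriv (deriv u) x + 2 * lam * u x * log (u x) = 0)
    (hutop : Tendsto u atTop (𝓝 0)) (x : ℝ) : energy lam u x = 0 := by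
  have hconst (y : ℝ) : energy lam u y = energy lam u x :=
    is_const_of_deriv_eq_zero (fun z => (hasDerivAt_energy hu hu' heq z).differentiableAt)
      (fun z => (hasDerivAt_energy hu hu' heq z).deriv) y x
  have hpot : Tendsto (fun y => lam * (u y ^ 2 * (log (u y) - 1 / 2))) atTop (𝓝 0) := by
    have hcont : Continuous fun t : ℝ => t ^ 2 * (log t - 1 / 2) :=
      continuous_iff_continuousAt.mpr fun t => (hasDerivAt_sq_mul_log_sub_half t).continuousAt
    simpa using ((hcont.tendsto 0).comp hutop).const_mul lam
  have hkin : Tendsto (fun y => deriv u y ^ 2) atTop (𝓝 (2 * energy lam u x)) := by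
    have := ((tendsto_const_nhds (x := energy lam u x)).sub hpot).const_mul 2
    rw [sub_zero] at this
    refine this.congr fun y => ?_
    rw [← hconst y, energy]
    ring
  simpa using eq_zero_of_tendsto_deriv_sq hu hutop hkin

theorem deriv_sq_eq (hu : Differentiable ℝ u) (hu' : Differentiable ℝ (deriv u))
    (heq : ∀ x, deriv (deriv u) x + 2 * lam * u x * log (u x) = 0)
    (hutop : Tendsto u atTop (𝓝 0)) (x : ℝ) :
    deriv u x ^ 2 = lam * u x ^ 2 * (1 - 2 * log (u x)) := by
  have h := energy_eq_zero hu hu' heq hutop x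
  rw [energy] at h
  linear_combination 2 * h

theorem hasDerivAt_deriv_div_self (hu : Differentiable ℝ u) (hu' : Differentiable ℝ (deriv u))
    (heq : ∀ x, deriv (deriv u) x + 2 * lam * u x * log (u x) = 0)
    (hutop : Tendsto u atTop (𝓝 0)) {x : ℝ} (hx : u x ≠ 0) :
    HasDerivAt (fun y => deriv u y / u y) (-lam) x := by
  refine ((hu' x).hasDerivAt.div (hu x).hasDerivAt hx).congr_deriv ?_
  rw [div_eq_iff (pow_ne_zero 2 hx)]
  linear_combination u x * heq x - deriv_sq_eq hu hu' heq hutop x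

theorem exists_log_eq_quadratic (hu : Differentiable ℝ u) (hu' : Differentiable ℝ (deriv u))
    (heq : ∀ x, deriv (deriv u) x + 2 * lam * u x * log (u x) = 0)
    (hutop : Tendsto u atTop (𝓝 0)) {s : Set ℝ} (hs : IsOpen s) (hs' : IsPreconnected s)
    (hsu : ∀ x ∈ s, u x ≠ 0) :
    ∃ b c, ∀ x ∈ s, deriv u x / u x = -lam * x + b ∧
      log (u x) = -lam / 2 * x ^ 2 + b * x + c :=
  hs.exists_eq_quadratic_of_hasDerivAt hs' (fun x hx => (hu x).hasDerivAt.log (hsu x hx))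
    (fun x hx => hasDerivAt_deriv_div_self hu hu' heq hutop (hsu x hx))

theorem ne_zero_of_forall_mem_Ioo_ne_zero (hu : Differentiable ℝ u)
    (hu' : Differentiable ℝ (deriv u))
    (heq : ∀ x, deriv (deriv u) x + 2 * lam * u x * log (u x) = 0)
    (hutop : Tendsto u atTop (𝓝 0)) {c d : ℝ} (hcd : c < d) (hne : ∀ x ∈ Ioo c d, u x ≠ 0) :
    u c ≠ 0 ∧ u d ≠ 0 := by
  obtain ⟨b, k, hbk⟩ := exists_log_eq_quadratic hu hu' heq hutop isOpen_Ioo isPreconnected_Ioo hne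
  -- `|u|` agrees with a Gaussian on `(c, d)`, hence on its closure
  have hIoo : EqOn (fun x => |u x|) (fun x => exp (-lam / 2 * x ^ 2 + b * x + k)) (Ioo c d) :=
    fun x hx => by simp only [← (hbk x hx).2, exp_log_eq_abs (hne x hx)]
  have hIcc := hIoo.closure hu.continuous.abs (by fun_prop)
  rw [closure_Ioo hcd.ne] at hIcc
  constructor
  · exact abs_ne_zero.mp ((hIcc (left_mem_Icc.mpr hcd.le)).trans_ne (exp_pos _).ne')
  · exact abs_ne_zero.mp ((hIcc (right_mem_Icc.mpr hcd.le)).trans_ne (exp_pos _).ne')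

theorem ne_zero_of_exists_ne_zero (hu : Differentiable ℝ u) (hu' : Differentiable ℝ (deriv u))
    (heq : ∀ x, deriv (deriv u) x + 2 * lam * u x * log (u x) = 0)
    (hutop : Tendsto u atTop (𝓝 0)) (hnontriv : ∃ x, u x ≠ 0) (x : ℝ) : u x ≠ 0 := by
  intro hx
  obtain ⟨y, hy⟩ := hnontriv
  obtain ⟨c, d, hcd, hend, hsub⟩ :=
    (isClosed_eq hu.continuous continuous_const).exists_Ioo_subset_compl (a := x) hx hy
  have := ne_zero_of_forall_mem_Ioo_ne_zero hu hu' heq hutop hcd hsub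
  tauto

end LogarithmicODE

theorem steady_state_uniqueness_general (lam : ℝ) (hlam : 0 < lam)
    (u : ℝ → ℝ) (hu : ContDiff ℝ 2 u) (hnonneg : ∀ x, 0 ≤ u x)
    (hnontriv : ∃ x, u x ≠ 0)
    (heq : ∀ x, deriv (deriv u) x + 2 * lam * u x * Real.log (u x) = 0)
    (hutop : Tendsto u atTop (nhds 0)) :
    ∃ x₀ : ℝ, ∀ x, u x = Real.exp (1 / 2 - lam * (x - x₀) ^ 2 / 2) := by
  have hd : Differentiable ℝ u := hu.differentiable two_ne_zero
  have hd' : Differentiable ℝ (deriv u) := hu.differentiable_deriv_two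
  have hne := ne_zero_of_exists_ne_zero hd hd' heq hutop hnontriv
  obtain ⟨b, c, hbc⟩ := exists_log_eq_quadratic hd hd' heq hutop isOpen_univ isPreconnected_univ
    fun x _ => hne x
  have hb : b ^ 2 = lam * (1 - 2 * c) := by
    have h0 := deriv_sq_eq hd hd' heq hutop 0
    obtain ⟨hderiv, hlog⟩ := hbc 0 (mem_univ 0)
    rw [div_eq_iff (hne 0)] at hderiv
    rw [hderiv, hlog] at h0
    refine mul_right_cancel₀ (pow_ne_zero 2 (hne 0)) ?_
    linear_combination h0
  refine ⟨b / lam, fun x => ?_⟩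
  rw [← exp_log ((hnonneg x).lt_of_ne' (hne x)), (hbc x (mem_univ x)).2]
  congr 1
  field_simp
  linear_combination hb

theorem steady_state_uniqueness (lam : ℝ) (hlam : 0 < lam)
    (u : ℝ → ℝ) (hu : ContDiff ℝ 2 u) (hnonneg : ∀ x, 0 ≤ u x)
    (hnontriv : ∃ x, u x ≠ 0)
    (heq : ∀ x, deriv (deriv u) x + 2 * lam * u x * Real.log (u x) = 0)
    (hutop : Tendsto u atTop (nhds 0)) (hubot : Tendsto u atBot (nhds 0)) :
    ∃ x₀ : ℝ, ∀ x, u x = Real.exp (1 / 2 - lam * (x - x₀) ^ 2 / 2) :=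
  steady_state_uniqueness_general lam hlam u hu hnonneg hnontriv heq hutop
end

section
/- Define u(t,x) = exp(ψ(t) e^{2λt}) · exp(−a(t)x²/2) with a(t) = λ a₀ e^{2λt}/(λ − a₀ + a₀ e^{2λt}) and ψ(t) = ln b₀ − (a₀/2)·(ln λ − ln(a₀ + (λ−a₀)e^{−2λt}))/(λ − a₀) (assuming a₀ ≠ λ). Then u satisfies ∂ₜu = ∂ₓₓu + λ u ln(u²) for all t > 0, x ∈ ℝ, and u(0,x) = b₀ e^{−a₀x²/2}. -/
/-!
For the Gaussian ansatz `u t x = exp (g t - a t * x ^ 2 / 2)` the logarithmic heat equation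
splits, by comparing coefficients of `x ^ 2` and `1`, into the Riccati equation
`a' = 2 λ a - 2 a ^ 2` and the linear equation `g' = 2 λ g - a`. The given `a` solves the first,
and with `g = ψ e^{2λt}` the second reduces to `ψ' = -a e^{-2λt}`, which is what differentiating
the given `ψ` yields.
-/

open Real

theorem hasDerivAt_gaussian (g c y : ℝ) :
    HasDerivAt (fun y => exp (g - c * y ^ 2 / 2)) (-(c * y) * exp (g - c * y ^ 2 / 2)) y := by
  have h := (((hasDerivAt_pow 2 y).const_mul c).div_const 2).const_sub g |>.exp
  convert h using 1
  push_cast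
  ring

theorem deriv_deriv_gaussian (g c x : ℝ) :
    deriv (deriv fun y => exp (g - c * y ^ 2 / 2)) x =
      (c ^ 2 * x ^ 2 - c) * exp (g - c * x ^ 2 / 2) := by
  have hfirst : deriv (fun y => exp (g - c * y ^ 2 / 2)) =
      fun y => -(c * y) * exp (g - c * y ^ 2 / 2) :=
    funext fun y => (hasDerivAt_gaussian g c y).deriv
  have hlin : HasDerivAt (fun y => -(c * y)) (-c) x := by
    simpa using ((hasDerivAt_id x).const_mul c).fun_neg
  rw [hfirst, (hlin.fun_mul (hasDerivAt_gaussian g c x)).deriv]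
  ring

theorem log_heat_of_gaussian_ansatz {lam t : ℝ} {g a : ℝ → ℝ}
    (hg : HasDerivAt g (2 * lam * g t - a t) t)
    (ha : HasDerivAt a (2 * lam * a t - 2 * a t ^ 2) t) (x : ℝ) :
    deriv (fun τ => exp (g τ - a τ * x ^ 2 / 2)) t =
      deriv (deriv fun y => exp (g t - a t * y ^ 2 / 2)) x +
        lam * exp (g t - a t * x ^ 2 / 2) * log (exp (g t - a t * x ^ 2 / 2) ^ 2) := by
  have htime := (hg.fun_sub ((ha.mul_const (x ^ 2)).div_const 2)).exp
  rw [htime.deriv, deriv_deriv_gaussian, log_pow, log_exp]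
  push_cast
  ring

theorem hasDerivAt_exp_const_mul (k t : ℝ) :
    HasDerivAt (fun τ => exp (k * τ)) (k * exp (k * t)) t := by
  simpa [mul_comm] using ((hasDerivAt_id t).const_mul k).exp

theorem hasDerivAt_riccati_solution {lam a₀ t : ℝ} {a : ℝ → ℝ}
    (ha : ∀ t, a t = lam * a₀ * exp (2 * lam * t) / (lam - a₀ + a₀ * exp (2 * lam * t)))
    (hD : lam - a₀ + a₀ * exp (2 * lam * t) ≠ 0) :
    HasDerivAt a (2 * lam * a t - 2 * a t ^ 2) t := by
  have hE := hasDerivAt_exp_const_mul (2 * lam) t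
  rw [funext ha]
  refine ((hE.const_mul (lam * a₀)).fun_div
    ((hE.const_mul a₀).const_add (lam - a₀)) hD).congr_deriv ?_
  field_simp

theorem hasDerivAt_psi {lam a₀ b₀ t : ℝ} {a ψ : ℝ → ℝ} (hne : a₀ ≠ lam)
    (ha : ∀ t, a t = lam * a₀ * exp (2 * lam * t) / (lam - a₀ + a₀ * exp (2 * lam * t)))
    (hψ : ∀ t, ψ t = log b₀ - (a₀ / 2) *
        (log lam - log (a₀ + (lam - a₀) * exp (-(2 * lam * t)))) / (lam - a₀))
    (hD : lam - a₀ + a₀ * exp (2 * lam * t) ≠ 0) :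
    HasDerivAt ψ (-(a t * exp (-(2 * lam * t)))) t := by
  have hF : a₀ + (lam - a₀) * exp (-(2 * lam * t)) =
      (lam - a₀ + a₀ * exp (2 * lam * t)) * exp (-(2 * lam * t)) := by
    rw [exp_neg]; field_simp; ring
  have hE := hasDerivAt_exp_const_mul (-(2 * lam)) t
  simp only [neg_mul] at hE
  have hlog := ((hE.const_mul (lam - a₀)).const_add a₀).log (by rw [hF]; positivity)
  rw [funext hψ]
  refine ((((hlog.const_sub (log lam)).const_mul (a₀ / 2)).div_const (lam - a₀)).const_sub
    (log b₀)).congr_deriv ?_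
  rw [ha, hF, exp_neg]
  field_simp [sub_ne_zero.2 hne.symm]

theorem hasDerivAt_mul_exp_const_mul {ψ : ℝ → ℝ} {k t b : ℝ}
    (hψ : HasDerivAt ψ (-(b * exp (-(k * t)))) t) :
    HasDerivAt (fun τ => ψ τ * exp (k * τ)) (k * (ψ t * exp (k * t)) - b) t := by
  refine (hψ.fun_mul (hasDerivAt_exp_const_mul k t)).congr_deriv ?_
  rw [exp_neg]
  field_simp
  ring

theorem riccati_denom_pos {lam a₀ t : ℝ} (hlam : 0 < lam) (ha₀ : 0 ≤ a₀) (ht : 0 ≤ t) :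
    0 < lam - a₀ + a₀ * exp (2 * lam * t) := by
  nlinarith [one_le_exp (by positivity : 0 ≤ 2 * lam * t)]

theorem gaussian_solution_pde (lam a₀ b₀ : ℝ) (hlam : 0 < lam) (ha₀ : 0 < a₀)
    (hb₀ : 0 < b₀) (hne : a₀ ≠ lam)
    (a : ℝ → ℝ)
    (ha : ∀ t, a t = lam * a₀ * Real.exp (2 * lam * t) /
        (lam - a₀ + a₀ * Real.exp (2 * lam * t)))
    (ψ : ℝ → ℝ)
    (hψ : ∀ t, ψ t = Real.log b₀ - (a₀ / 2) *
        (Real.log lam - Real.log (a₀ + (lam - a₀) * Real.exp (-(2 * lam * t)))) / (lam - a₀))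
    (u : ℝ → ℝ → ℝ)
    (hu : ∀ t x, u t x = Real.exp (ψ t * Real.exp (2 * lam * t)) *
        Real.exp (-(a t * x ^ 2 / 2))) :
    (∀ t > (0:ℝ), ∀ x : ℝ,
      deriv (fun τ => u τ x) t =
        deriv (deriv (fun y => u t y)) x + lam * u t x * Real.log ((u t x) ^ 2)) ∧
    (∀ x : ℝ, u 0 x = b₀ * Real.exp (-(a₀ * x ^ 2 / 2))) := by
  have hu_exp : ∀ t x, u t x = exp (ψ t * exp (2 * lam * t) - a t * x ^ 2 / 2) := by
    intro t x
    rw [hu, ← exp_add, sub_eq_add_neg]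
  refine ⟨fun t ht x => ?_, fun x => ?_⟩
  · have hD := (riccati_denom_pos hlam ha₀.le ht.le).ne'
    simp only [hu_exp]
    exact log_heat_of_gaussian_ansatz (hasDerivAt_mul_exp_const_mul (hasDerivAt_psi hne ha hψ hD))
      (hasDerivAt_riccati_solution ha hD) x
  · have ha_zero : a 0 = a₀ := by
      simp [ha, hlam.ne']
    have hψ_zero : ψ 0 = log b₀ := by
      simp [hψ]
    rw [hu, ha_zero, hψ_zero]
    simp [exp_log hb₀]
end

section
/- In the case a₀ = λ: the function u(t,x) = exp(ψ(t)e^{2λt}) e^{−λx²/2} with ψ(t) = ln b₀ − (1/2)(1 − e^{−2λt}) satisfies ∂ₜu = ∂ₓₓu + λ u ln(u²) for t > 0 and u(0,x) = b₀ e^{−λx²/2}. -/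
/-! With `φ(t) = ψ(t) e^{2λt}` one has `u = e^{φ(t)} e^{-λx²/2}`, and `φ` solves the linear ODE
`φ' = 2λφ - λ`. Since `∂ₓₓu = (λ²x² - λ) u` and `λ u log u² = (2λφ - λ²x²) u`, the right-hand side
of the equation is `(2λφ - λ) u = φ' u = ∂ₜu`. At `t = 0`, `φ(0) = log b₀`. -/

open Real

theorem hasDerivAt_const_mul_exp_neg_mul_sq_div_two (c a y : ℝ) :
    HasDerivAt (fun y => c * exp (-(a * y ^ 2 / 2))) (-(a * y) * (c * exp (-(a * y ^ 2 / 2)))) y := by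
  have hq : HasDerivAt (fun y => -(a * y ^ 2 / 2)) (-(a * y)) y := by
    refine (((hasDerivAt_pow 2 y).const_mul a).div_const 2).fun_neg.congr_deriv ?_
    ring
  refine (hq.exp.const_mul c).congr_deriv ?_
  ring

theorem deriv_deriv_const_mul_exp_neg_mul_sq_div_two (c a x : ℝ) :
    deriv (deriv fun y => c * exp (-(a * y ^ 2 / 2))) x =
      (a ^ 2 * x ^ 2 - a) * (c * exp (-(a * x ^ 2 / 2))) := by
  have hderiv : deriv (fun y => c * exp (-(a * y ^ 2 / 2))) =
      fun y => -(a * y) * (c * exp (-(a * y ^ 2 / 2))) :=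
    funext fun y => (hasDerivAt_const_mul_exp_neg_mul_sq_div_two c a y).deriv
  have hlin : HasDerivAt (fun y : ℝ => -(a * y)) (-a) x := by
    simpa using ((hasDerivAt_id x).const_mul a).fun_neg
  rw [hderiv, (hlin.fun_mul (hasDerivAt_const_mul_exp_neg_mul_sq_div_two c a x)).deriv]
  ring

theorem hasDerivAt_amplitude_exponent (a c t : ℝ) :
    HasDerivAt (fun τ => (c - 1 / 2 * (1 - exp (-(2 * a * τ)))) * exp (2 * a * τ))
      (2 * a * ((c - 1 / 2 * (1 - exp (-(2 * a * t)))) * exp (2 * a * t)) - a) t := by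
  have hexp : HasDerivAt (fun τ => exp (2 * a * τ)) (2 * a * exp (2 * a * t)) t := by
    simpa [mul_comm] using ((hasDerivAt_id t).const_mul (2 * a)).exp
  have hexp_neg : HasDerivAt (fun τ => exp (-(2 * a * τ))) (-(2 * a) * exp (-(2 * a * t))) t := by
    simpa [mul_comm] using ((hasDerivAt_id t).const_mul (2 * a)).fun_neg.exp
  have hinv : exp (-(2 * a * t)) * exp (2 * a * t) = 1 := by
    rw [← exp_add, neg_add_cancel, exp_zero]
  refine ((((hexp_neg.const_sub 1).const_mul (1 / 2)).const_sub c).fun_mul hexp).congr_deriv ?_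
  linear_combination -a * hinv

theorem log_sq_exp_mul_exp (A B : ℝ) : log ((exp A * exp B) ^ 2) = 2 * (A + B) := by
  rw [← exp_add, ← exp_nat_mul, log_exp]
  push_cast
  ring

theorem gaussian_solution_pde_critical_general (lam b₀ : ℝ) (hb₀ : 0 < b₀)
    (ψ : ℝ → ℝ)
    (hψ : ∀ t, ψ t = Real.log b₀ - (1 / 2) * (1 - Real.exp (-(2 * lam * t))))
    (u : ℝ → ℝ → ℝ)
    (hu : ∀ t x, u t x = Real.exp (ψ t * Real.exp (2 * lam * t)) *
        Real.exp (-(lam * x ^ 2 / 2))) :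
    (∀ t > (0:ℝ), ∀ x : ℝ,
      deriv (fun τ => u τ x) t =
        deriv (deriv (fun y => u t y)) x + lam * u t x * Real.log ((u t x) ^ 2)) ∧
    (∀ x : ℝ, u 0 x = b₀ * Real.exp (-(lam * x ^ 2 / 2))) := by
  obtain rfl : ψ = fun t => log b₀ - 1 / 2 * (1 - exp (-(2 * lam * t))) := funext hψ
  obtain rfl : u = fun t x => exp ((log b₀ - 1 / 2 * (1 - exp (-(2 * lam * t)))) *
      exp (2 * lam * t)) * exp (-(lam * x ^ 2 / 2)) := funext₂ hu
  refine ⟨fun t _ x => ?_, fun x => by simp [exp_log hb₀]⟩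
  have htime := ((hasDerivAt_amplitude_exponent lam (log b₀) t).exp).mul_const
    (exp (-(lam * x ^ 2 / 2)))
  rw [htime.deriv, deriv_deriv_const_mul_exp_neg_mul_sq_div_two, log_sq_exp_mul_exp]
  ring

theorem gaussian_solution_pde_critical (lam b₀ : ℝ) (hlam : 0 < lam) (hb₀ : 0 < b₀)
    (ψ : ℝ → ℝ)
    (hψ : ∀ t, ψ t = Real.log b₀ - (1 / 2) * (1 - Real.exp (-(2 * lam * t))))
    (u : ℝ → ℝ → ℝ)
    (hu : ∀ t x, u t x = Real.exp (ψ t * Real.exp (2 * lam * t)) *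
        Real.exp (-(lam * x ^ 2 / 2))) :
    (∀ t > (0:ℝ), ∀ x : ℝ,
      deriv (fun τ => u τ x) t =
        deriv (deriv (fun y => u t y)) x + lam * u t x * Real.log ((u t x) ^ 2)) ∧
    (∀ x : ℝ, u 0 x = b₀ * Real.exp (-(lam * x ^ 2 / 2))) :=
  gaussian_solution_pde_critical_general lam b₀ hb₀ ψ hψ u hu
end

section
/- Let b₀, a₀ > 0 with ψ∞ := ln b₀ − (a₀/2)(ln λ − ln a₀)/(λ−a₀) (with continuation ln b₀ − 1/2 if a₀ = λ). If ψ∞ < 0 then the Gaussian solution u(t,x) = e^{ψ(t)e^{2λt}} e^{−a(t)x²/2} satisfies sup_x u(t,x) / (e^{1/2} e^{ψ∞ e^{2λt}}) → 1 as t → ∞; in particular ‖u(t,·)‖_∞ decays like a double exponential. -/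
/-! With `ε = e^{-2λt}`, the gap `ψ(t) - ψ∞` is `(a₀/2)(log(a₀ + (λ - a₀)ε) - log a₀)/(λ - a₀)`,
a difference quotient of `log` at `a₀`, so `(ψ(t) - ψ∞) e^{2λt} → 1/2`. Since `a(t) ≥ 0` for
`t ≥ 0`, the supremum of `u(t, ·)` is attained at `x = 0`, and the ratio is
`exp ((ψ(t) - ψ∞) e^{2λt} - 1/2) → 1`. -/

open Filter Topology Real

theorem iSup_mul_exp_neg_mul_sq {C b : ℝ} (hC : 0 ≤ C) (hb : 0 ≤ b) :
    ⨆ x : ℝ, C * exp (-(b * x ^ 2 / 2)) = C := by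
  refine ciSup_eq_of_forall_le_of_forall_lt_exists_gt (fun x => ?_) fun w hw => ⟨0, by simpa⟩
  have hexp : exp (-(b * x ^ 2 / 2)) ≤ 1 := exp_le_one_iff.mpr (by nlinarith [sq_nonneg x])
  exact mul_le_of_le_one_right hC hexp

theorem tendsto_log_add_mul_sub_log_div {a : ℝ} (c : ℝ) (ha : 0 < a) :
    Tendsto (fun ε => (log (a + c * ε) - log a) / ε) (𝓝[>] 0) (𝓝 (c / a)) := by
  have hderiv : HasDerivAt (fun ε => log (a + c * ε)) (c / a) 0 := by
    simpa using (((hasDerivAt_id (0 : ℝ)).const_mul c).const_add a).log (by simpa using ha.ne')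
  simpa [div_eq_inv_mul] using hderiv.tendsto_slope_zero_right

theorem tendsto_exp_neg_mul_atTop_nhdsGT {k : ℝ} (hk : 0 < k) :
    Tendsto (fun t => exp (-(k * t))) atTop (𝓝[>] 0) :=
  tendsto_exp_atBot_nhdsGT.comp (tendsto_neg_atTop_atBot.comp (tendsto_id.const_mul_atTop hk))

theorem tendsto_sub_mul_exp_of_gaussian_psi {lam a₀ b₀ : ℝ} (hlam : 0 < lam) (ha₀ : 0 < a₀)
    {ψ : ℝ → ℝ}
    (hψ : ∀ t, ψ t = if a₀ = lam then log b₀ - (1 / 2) * (1 - exp (-(2 * lam * t)))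
        else log b₀ - (a₀ / 2) *
          (log lam - log (a₀ + (lam - a₀) * exp (-(2 * lam * t)))) / (lam - a₀))
    {ψinf : ℝ}
    (hψinf : ψinf = if a₀ = lam then log b₀ - 1 / 2
        else log b₀ - (a₀ / 2) * (log lam - log a₀) / (lam - a₀)) :
    Tendsto (fun t => (ψ t - ψinf) * exp (2 * lam * t)) atTop (𝓝 (1 / 2)) := by
  have hinv : ∀ t, exp (2 * lam * t) = (exp (-(2 * lam * t)))⁻¹ := fun t => by
    rw [← exp_neg, neg_neg]
  by_cases hcase : a₀ = lam
  · refine tendsto_const_nhds.congr fun t => ?_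
    have hε := (exp_pos (-(2 * lam * t))).ne'
    simp only [hψ, hψinf, if_pos hcase, hinv]
    field_simp
    ring
  · have hne : lam - a₀ ≠ 0 := sub_ne_zero.mpr (Ne.symm hcase)
    have hquot := ((tendsto_log_add_mul_sub_log_div (lam - a₀) ha₀).comp
      (tendsto_exp_neg_mul_atTop_nhdsGT (by positivity : 0 < 2 * lam))).const_mul
        (a₀ / (2 * (lam - a₀)))
    have hlim : a₀ / (2 * (lam - a₀)) * ((lam - a₀) / a₀) = 1 / 2 := by
      field_simp
    rw [hlim] at hquot
    refine hquot.congr fun t => ?_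
    have hε := (exp_pos (-(2 * lam * t))).ne'
    simp only [Function.comp_apply, hψ, hψinf, if_neg hcase, hinv]
    field_simp
    ring

theorem gaussian_superexponential_decay_general (lam a₀ b₀ : ℝ) (hlam : 0 < lam) (ha₀ : 0 < a₀)
    (a : ℝ → ℝ)
    (ha : ∀ t, a t = lam * a₀ * Real.exp (2 * lam * t) /
        (lam - a₀ + a₀ * Real.exp (2 * lam * t)))
    (ψ : ℝ → ℝ)
    (hψ : ∀ t, ψ t = if a₀ = lam then Real.log b₀ - (1 / 2) * (1 - Real.exp (-(2 * lam * t)))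
        else Real.log b₀ - (a₀ / 2) *
          (Real.log lam - Real.log (a₀ + (lam - a₀) * Real.exp (-(2 * lam * t)))) / (lam - a₀))
    (ψinf : ℝ)
    (hψinf : ψinf = if a₀ = lam then Real.log b₀ - 1 / 2
        else Real.log b₀ - (a₀ / 2) * (Real.log lam - Real.log a₀) / (lam - a₀))
    (u : ℝ → ℝ → ℝ)
    (hu : ∀ t x, u t x = Real.exp (ψ t * Real.exp (2 * lam * t)) *
        Real.exp (-(a t * x ^ 2 / 2))) :
    Tendsto (fun t => (⨆ x : ℝ, u t x) /
        (Real.exp (1 / 2) * Real.exp (ψinf * Real.exp (2 * lam * t)))) atTop (nhds 1) := by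
  have hsup : ∀ᶠ t in atTop, (⨆ x : ℝ, u t x) = exp (ψ t * exp (2 * lam * t)) := by
    filter_upwards [eventually_ge_atTop 0] with t ht
    have hE : 1 ≤ exp (2 * lam * t) := one_le_exp (by positivity)
    have hat : 0 ≤ a t := by
      rw [ha]
      exact div_nonneg (by positivity) (by nlinarith)
    simp_rw [hu]
    exact iSup_mul_exp_neg_mul_sq (exp_pos _).le hat
  have hexp : Tendsto (fun t => exp ((ψ t - ψinf) * exp (2 * lam * t) - 1 / 2)) atTop (𝓝 1) := by
    simpa using ((tendsto_sub_mul_exp_of_gaussian_psi hlam ha₀ hψ hψinf).sub_const (1 / 2)).rexp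
  refine hexp.congr' ?_
  filter_upwards [hsup] with t hsup_t
  rw [hsup_t, ← exp_add, ← exp_sub]
  ring_nf

theorem gaussian_superexponential_decay (lam a₀ b₀ : ℝ) (hlam : 0 < lam) (ha₀ : 0 < a₀)
    (hb₀ : 0 < b₀)
    (a : ℝ → ℝ)
    (ha : ∀ t, a t = lam * a₀ * Real.exp (2 * lam * t) /
        (lam - a₀ + a₀ * Real.exp (2 * lam * t)))
    (ψ : ℝ → ℝ)
    (hψ : ∀ t, ψ t = if a₀ = lam then Real.log b₀ - (1 / 2) * (1 - Real.exp (-(2 * lam * t)))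
        else Real.log b₀ - (a₀ / 2) *
          (Real.log lam - Real.log (a₀ + (lam - a₀) * Real.exp (-(2 * lam * t)))) / (lam - a₀))
    (ψinf : ℝ)
    (hψinf : ψinf = if a₀ = lam then Real.log b₀ - 1 / 2
        else Real.log b₀ - (a₀ / 2) * (Real.log lam - Real.log a₀) / (lam - a₀))
    (hneg : ψinf < 0)
    (u : ℝ → ℝ → ℝ)
    (hu : ∀ t x, u t x = Real.exp (ψ t * Real.exp (2 * lam * t)) *
        Real.exp (-(a t * x ^ 2 / 2))) :
    Tendsto (fun t => (⨆ x : ℝ, u t x) /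
        (Real.exp (1 / 2) * Real.exp (ψinf * Real.exp (2 * lam * t)))) atTop (nhds 1) :=
  gaussian_superexponential_decay_general lam a₀ b₀ hlam ha₀ a ha ψ hψ ψinf hψinf u hu
end

section
/- Let b₀, a₀ > 0 and ψ∞ = ln b₀ − (a₀/2)(ln λ − ln a₀)/(λ−a₀) = 0 (continuation ln b₀ − 1/2 = 0 if a₀ = λ). Then the Gaussian solution u(t,x) = e^{ψ(t)e^{2λt}} e^{−a(t)x²/2} converges uniformly on ℝ to the steady state φ(x) = e^{1/2} e^{−λx²/2} as t → ∞. -/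
open Filter

private lemma exp_decay_diff' (m A B s : ℝ) (hA : m ≤ A) (hB : m ≤ B)
    (hs : 0 ≤ s) :
    |Real.exp (-(A*s)) - Real.exp (-(B*s))| ≤ |A - B| * (s * Real.exp (-(m*s))) := by
  wlog h : A ≤ B generalizing A B
  · rw [abs_sub_comm, abs_sub_comm A B]; exact this B A hB hA (le_of_not_ge h)
  have h1 : Real.exp (-(B*s)) ≤ Real.exp (-(A*s)) := by
    apply Real.exp_le_exp.2; nlinarith
  rw [abs_of_nonneg (by linarith : (0:ℝ) ≤ Real.exp (-(A*s)) - Real.exp (-(B*s))),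
    abs_of_nonpos (by linarith : A - B ≤ 0)]
  have key : Real.exp (-(A*s)) - Real.exp (-(B*s))
      = Real.exp (-(A*s)) * (1 - Real.exp (-((B-A)*s))) := by
    rw [mul_sub, mul_one, ← Real.exp_add]; ring_nf
  rw [key]
  have h2 : 1 - Real.exp (-((B-A)*s)) ≤ (B-A)*s := by
    have := Real.add_one_le_exp (-((B-A)*s)); linarith
  have h3 : Real.exp (-(A*s)) ≤ Real.exp (-(m*s)) := by
    apply Real.exp_le_exp.2; nlinarith
  have h4 : 0 ≤ 1 - Real.exp (-((B-A)*s)) := by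
    have : Real.exp (-((B-A)*s)) ≤ 1 := by
      rw [Real.exp_le_one_iff]; nlinarith
    linarith
  calc Real.exp (-(A*s)) * (1 - Real.exp (-((B-A)*s)))
      ≤ Real.exp (-(m*s)) * ((B-A)*s) := by
        apply mul_le_mul h3 h2 h4 (Real.exp_pos _).le
    _ = -(A-B) * (s * Real.exp (-(m*s))) := by ring

private lemma s_exp_bound' (m s : ℝ) (hm : 0 < m) :
    s * Real.exp (-(m*s)) ≤ 1/m := by
  have hp := Real.exp_pos (m*s)
  have h := Real.add_one_le_exp (m*s)
  rw [Real.exp_neg, mul_inv_le_iff₀ hp, div_mul_eq_mul_div, le_div_iff₀ hm]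
  nlinarith

private lemma unif_aux' (lam : ℝ) (hlam : 0 < lam) (a c : ℝ → ℝ)
    (ha : Tendsto a atTop (nhds lam)) (hc : Tendsto c atTop (nhds (1/2 : ℝ))) :
    TendstoUniformly (fun t x => Real.exp (c t) * Real.exp (-(a t * x^2/2)))
      (fun x => Real.exp (1/2) * Real.exp (-(lam * x^2/2))) atTop := by
  rw [Metric.tendstoUniformly_iff]
  intro ε hε
  have hE := Real.exp_pos (1/2 : ℝ)
  set δ := min (lam/2) (ε * lam / (4 * Real.exp (1/2))) with hδdef
  have hδpos : 0 < δ := lt_min (by linarith) (by positivity)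
  have h1 : ∀ᶠ t in atTop, |Real.exp (c t) - Real.exp (1/2)| < ε/4 := by
    have hcc : Tendsto (fun t => Real.exp (c t)) atTop (nhds (Real.exp (1/2))) :=
      (Real.continuous_exp.tendsto _).comp hc
    filter_upwards [Metric.tendsto_nhds.mp hcc (ε/4) (by linarith)] with t ht
    rwa [Real.dist_eq] at ht
  have h2 : ∀ᶠ t in atTop, |a t - lam| < δ := by
    filter_upwards [Metric.tendsto_nhds.mp ha δ hδpos] with t ht
    rwa [Real.dist_eq] at ht
  filter_upwards [h1, h2] with t ht1 ht2 x
  rw [Real.dist_eq]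
  set s := x^2/2 with hsdef
  have hs0 : 0 ≤ s := by positivity
  have habs := abs_lt.mp ht2
  have hδ1 : δ ≤ lam/2 := min_le_left _ _
  have hδ2 : δ ≤ ε * lam / (4 * Real.exp (1/2)) := min_le_right _ _
  have hA : lam/2 ≤ a t := by linarith [habs.1]
  have key := exp_decay_diff' (lam/2) lam (a t) s (by linarith) hA hs0
  have hse : s * Real.exp (-(lam/2*s)) ≤ 2/lam := by
    have := s_exp_bound' (lam/2) s (by linarith)
    calc s * Real.exp (-(lam/2*s)) ≤ 1/(lam/2) := this
      _ = 2/lam := by field_simp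
  have hAl : |lam - a t| ≤ δ := by rw [abs_sub_comm]; exact ht2.le
  have goal_eq : Real.exp (1/2) * Real.exp (-(lam * x^2/2)) - Real.exp (c t) * Real.exp (-(a t * x^2/2))
      = Real.exp (1/2) * Real.exp (-(lam * s)) - Real.exp (c t) * Real.exp (-(a t * s)) := by
    rw [hsdef]; ring_nf
  rw [goal_eq]
  have tri : |Real.exp (1/2) * Real.exp (-(lam * s)) - Real.exp (c t) * Real.exp (-(a t * s))|
      ≤ |Real.exp (1/2) * Real.exp (-(lam * s)) - Real.exp (1/2) * Real.exp (-(a t * s))|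
        + |Real.exp (1/2) * Real.exp (-(a t * s)) - Real.exp (c t) * Real.exp (-(a t * s))| :=
    abs_sub_le _ _ _
  have term1 : |Real.exp (1/2) * Real.exp (-(lam * s)) - Real.exp (1/2) * Real.exp (-(a t * s))|
      ≤ Real.exp (1/2) * (δ * (2/lam)) := by
    rw [← mul_sub, abs_mul, abs_of_pos hE]
    apply mul_le_mul_of_nonneg_left _ hE.le
    calc |Real.exp (-(lam * s)) - Real.exp (-(a t * s))|
        ≤ |lam - a t| * (s * Real.exp (-(lam/2*s))) := key
      _ ≤ δ * (2/lam) := by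
          apply mul_le_mul hAl hse (by positivity) hδpos.le
  have term2 : |Real.exp (1/2) * Real.exp (-(a t * s)) - Real.exp (c t) * Real.exp (-(a t * s))|
      ≤ ε/4 := by
    rw [← sub_mul, abs_mul, abs_of_pos (Real.exp_pos _)]
    have hle1 : Real.exp (-(a t * s)) ≤ 1 := by
      rw [Real.exp_le_one_iff]; nlinarith
    have habsle : |Real.exp (1/2) - Real.exp (c t)| ≤ ε/4 := by
      rw [abs_sub_comm]; exact ht1.le
    calc |Real.exp (1/2) - Real.exp (c t)| * Real.exp (-(a t * s))
        ≤ (ε/4) * 1 := mul_le_mul habsle hle1 (Real.exp_pos _).le (by linarith)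
      _ = ε/4 := mul_one _
  have termbound : Real.exp (1/2) * (δ * (2/lam)) ≤ ε/2 := by
    have heq2 : Real.exp (1/2) * ((ε * lam / (4 * Real.exp (1/2))) * (2/lam)) = ε/2 := by
      field_simp; ring
    calc Real.exp (1/2) * (δ * (2/lam))
        ≤ Real.exp (1/2) * ((ε * lam / (4 * Real.exp (1/2))) * (2/lam)) := by
          apply mul_le_mul_of_nonneg_left _ hE.le
          apply mul_le_mul_of_nonneg_right hδ2 (by positivity)
      _ = ε/2 := heq2
  linarith [tri, term1, term2, termbound]

theorem gaussian_convergence_to_steady_state (lam a₀ b₀ : ℝ) (hlam : 0 < lam) (ha₀ : 0 < a₀)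
    (hb₀ : 0 < b₀)
    (a : ℝ → ℝ)
    (ha : ∀ t, a t = lam * a₀ * Real.exp (2 * lam * t) /
        (lam - a₀ + a₀ * Real.exp (2 * lam * t)))
    (ψ : ℝ → ℝ)
    (hψ : ∀ t, ψ t = if a₀ = lam then Real.log b₀ - (1 / 2) * (1 - Real.exp (-(2 * lam * t)))
        else Real.log b₀ - (a₀ / 2) *
          (Real.log lam - Real.log (a₀ + (lam - a₀) * Real.exp (-(2 * lam * t)))) / (lam - a₀))
    (hcrit : (if a₀ = lam then Real.log b₀ - 1 / 2
        else Real.log b₀ - (a₀ / 2) * (Real.log lam - Real.log a₀) / (lam - a₀)) = 0)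
    (u : ℝ → ℝ → ℝ)
    (hu : ∀ t x, u t x = Real.exp (ψ t * Real.exp (2 * lam * t)) *
        Real.exp (-(a t * x ^ 2 / 2)))
    (φ : ℝ → ℝ) (hφ : ∀ x, φ x = Real.exp (1 / 2) * Real.exp (-(lam * x ^ 2 / 2))) :
    TendstoUniformly u φ atTop := by
  have hexp : Tendsto (fun t : ℝ => Real.exp (-(2*lam*t))) atTop (nhds 0) := by
    apply Real.tendsto_exp_atBot.comp
    exact tendsto_neg_atBot_iff.mpr (tendsto_id.const_mul_atTop (by positivity))
  -- limit of a
  have haT : Tendsto a atTop (nhds lam) := by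
    have hden : Tendsto (fun t : ℝ => (lam - a₀) * Real.exp (-(2*lam*t)) + a₀) atTop (nhds a₀) := by
      have := (hexp.const_mul (lam - a₀)).add (tendsto_const_nhds (x := a₀))
      simpa using this
    have hdiv : Tendsto (fun t : ℝ => lam * a₀ / ((lam - a₀) * Real.exp (-(2*lam*t)) + a₀))
        atTop (nhds lam) := by
      have hq := (tendsto_const_nhds (x := lam * a₀)).div hden ha₀.ne'
      have heq : lam * a₀ / a₀ = lam := by field_simp
      rwa [heq] at hq
    apply hdiv.congr'
    filter_upwards [eventually_ge_atTop (0:ℝ)] with t ht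
    rw [ha t]
    have hE : (0:ℝ) < Real.exp (2*lam*t) := Real.exp_pos _
    have h1 : (lam - a₀) * Real.exp (-(2*lam*t)) + a₀
        = (lam - a₀ + a₀ * Real.exp (2*lam*t)) / Real.exp (2*lam*t) := by
      rw [Real.exp_neg]; field_simp
    rw [h1, div_div_eq_mul_div]
  -- limit of ψ t * exp (2 lam t)
  have hψT : Tendsto (fun t => ψ t * Real.exp (2 * lam * t)) atTop (nhds (1/2 : ℝ)) := by
    by_cases heq : a₀ = lam
    · rw [if_pos heq] at hcrit
      have hb : Real.log b₀ = 1/2 := by linarith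
      have hconst : ∀ t, ψ t * Real.exp (2 * lam * t) = 1/2 := by
        intro t
        rw [hψ t, if_pos heq, hb]
        have hx : Real.exp (-(2*lam*t)) * Real.exp (2*lam*t) = 1 := by
          rw [← Real.exp_add]; simp
        linear_combination (1/2) * hx
      exact Tendsto.congr (fun t => (hconst t).symm) tendsto_const_nhds
    · rw [if_neg heq] at hcrit
      have hla : lam - a₀ ≠ 0 := sub_ne_zero.2 (Ne.symm heq)
      set f : ℝ → ℝ := fun s => Real.log (a₀ + (lam - a₀)*s) with hfdef
      have hderiv : HasDerivAt f ((lam - a₀)/a₀) 0 := by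
        have h1 : HasDerivAt (fun s : ℝ => a₀ + (lam - a₀)*s) (lam - a₀) 0 := by
          simpa using ((hasDerivAt_id (0:ℝ)).const_mul (lam - a₀)).const_add a₀
        have h2 := h1.log (by simpa using ha₀.ne')
        simpa using h2
      have hslope := hasDerivAt_iff_tendsto_slope.mp hderiv
      have hst : Tendsto (fun t : ℝ => Real.exp (-(2*lam*t))) atTop (nhdsWithin 0 {(0:ℝ)}ᶜ) := by
        apply tendsto_nhdsWithin_of_tendsto_nhds_of_eventually_within _ hexp
        exact Eventually.of_forall fun t => (Real.exp_pos _).ne'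
      have hcomp := hslope.comp hst
      have hb : Real.log b₀ = (a₀/2)*(Real.log lam - Real.log a₀)/(lam - a₀) := by linarith
      have hC : ∀ t, ψ t * Real.exp (2 * lam * t)
          = (a₀/(2*(lam-a₀))) * slope f 0 (Real.exp (-(2*lam*t))) := by
        intro t
        rw [hψ t, if_neg heq, hb]
        rw [slope_def_field, hfdef]
        simp only [mul_zero, add_zero, div_zero, sub_zero]
        have hxE : Real.exp (-(2*lam*t)) = (Real.exp (2*lam*t))⁻¹ := by
          rw [← Real.exp_neg]
        rw [hxE]
        have hE : Real.exp (2*lam*t) ≠ 0 := (Real.exp_pos _).ne'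
        field_simp
        ring
      have hlim : (a₀/(2*(lam-a₀))) * ((lam-a₀)/a₀) = 1/2 := by
        field_simp
      have hfin := hcomp.const_mul (a₀/(2*(lam-a₀)))
      rw [hlim] at hfin
      exact hfin.congr fun t => (hC t).symm
  -- conclude
  have hu' : u = fun t x => Real.exp ((fun t => ψ t * Real.exp (2 * lam * t)) t) *
      Real.exp (-(a t * x^2/2)) := by
    funext t x; rw [hu t x]
  have hφ' : φ = fun x => Real.exp ((1:ℝ)/2) * Real.exp (-(lam * x^2/2)) := by
    funext x; rw [hφ x]
  rw [hu', hφ']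
  exact unif_aux' lam hlam a _ haT hψT
end

section
/- Let Θ : ℝ → ℝ be C³ on [−L, L], vanishing outside [−L, L], with Θ > 0 on (−L, L), Θ(±L) = Θ'(±L) = Θ''(±L) = 0, Θ'''(−L) = −Θ'''(L) = γ > 0, and Θ ≡ 1 on [−L+ε, L−ε] where 0 < ε < L. Then there exists K₀ > 1 such that for all K ≥ K₀, the function Θ_K = KΘ satisfies Θ_K''(x) + 2λ Θ_K(x) ln Θ_K(x) ≥ 0 for all x ∈ ℝ (with the convention u ln u = 0 at u = 0). -/
/-!
Write `K Θ'' + 2λ (KΘ) ln (KΘ) = K (Θ'' + 2λ Θ ln Θ + 2λ Θ ln K)`. At distance `t` from an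
endpoint, the third-derivative condition gives `Θ'' ≥ γ t / 2`, while `Θ ≤ M t²` and
`u |ln u| ≤ 4 u^{3/4}` make `Θ ln Θ = O(t^{3/2})`; hence `Θ'' + 2λ Θ ln Θ ≥ 0` on a strip at
each end, and there `2λ Θ ln K ≥ 0` for `K ≥ 1`. On the compact part in between, `Θ ≥ θ* > 0`
and `Θ'' + 2λ Θ ln Θ` is bounded, so `2λ θ* ln K` dominates once `K` is large.
-/

open Set Filter Topology Real

lemma mul_neg_log_le_four_mul_rpow {u : ℝ} (hu : 0 ≤ u) : u * -log u ≤ 4 * u ^ (3 / 4 : ℝ) := by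
  rcases hu.eq_or_lt with rfl | hu
  · simp
  have h := log_le_rpow_div (inv_nonneg.2 hu.le) (by norm_num : (0 : ℝ) < 1 / 4)
  rw [log_inv, inv_rpow hu.le, ← rpow_neg hu.le] at h
  calc u * -log u ≤ u * (u ^ (-(1 / 4) : ℝ) / (1 / 4)) := by gcongr
    _ = 4 * (u ^ (1 : ℝ) * u ^ (-(1 / 4) : ℝ)) := by rw [rpow_one]; ring
    _ = 4 * u ^ (3 / 4 : ℝ) := by rw [← rpow_add hu]; norm_num

lemma eventually_neg_mul_le_mul_log {M c : ℝ} (hM : 0 ≤ M) (hc : 0 < c) :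
    ∀ᶠ t in 𝓝[>] (0 : ℝ), ∀ θ, 0 ≤ θ → θ ≤ M * t ^ 2 → -(c * t) ≤ θ * log θ := by
  have hlim : Tendsto (fun t => 4 * M ^ (3 / 4 : ℝ) * √t) (𝓝[>] 0) (𝓝 0) := by
    have := (continuous_sqrt.tendsto 0).const_mul (4 * M ^ (3 / 4 : ℝ))
    simpa using this.mono_left nhdsWithin_le_nhds
  filter_upwards [hlim.eventually (eventually_le_nhds hc), self_mem_nhdsWithin]
    with t hsmall (ht : 0 < t) θ hθ hθt
  have hpow : (M * t ^ 2) ^ (3 / 4 : ℝ) = M ^ (3 / 4 : ℝ) * √t * t := by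
    rw [mul_rpow hM (by positivity), ← rpow_natCast, ← rpow_mul ht.le, sqrt_eq_rpow,
      mul_assoc, ← rpow_add_one ht.ne']
    norm_num
  have := calc θ * -log θ ≤ 4 * θ ^ (3 / 4 : ℝ) := mul_neg_log_le_four_mul_rpow hθ
    _ ≤ 4 * (M * t ^ 2) ^ (3 / 4 : ℝ) := by gcongr
    _ = 4 * M ^ (3 / 4 : ℝ) * √t * t := by rw [hpow]; ring
    _ ≤ c * t := by gcongr
  linarith

lemma eventually_nonneg_add_mul_log {l : Filter ℝ} {F θ t : ℝ → ℝ} {k c M : ℝ}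
    (hk : 0 < k) (hc : 0 < c) (hM : 0 ≤ M) (ht : Tendsto t l (𝓝 0))
    (htpos : ∀ᶠ x in l, 0 < t x) (hF : ∀ᶠ x in l, c * t x ≤ F x)
    (hθ : ∀ᶠ x in l, 0 ≤ θ x ∧ θ x ≤ M * t x ^ 2) :
    ∀ᶠ x in l, 0 ≤ F x + k * (θ x * log (θ x)) := by
  have ht' : Tendsto t l (𝓝[>] 0) := tendsto_nhdsWithin_iff.2 ⟨ht, htpos⟩
  filter_upwards [ht'.eventually (eventually_neg_mul_le_mul_log hM (div_pos hc hk)), hF, hθ]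
    with x hlog hFx ⟨hθ0, hθM⟩
  have h2 : -(c * t x) ≤ k * (θ x * log (θ x)) := calc
    -(c * t x) = k * -(c / k * t x) := by field_simp
    _ ≤ k * (θ x * log (θ x)) := by gcongr; exact hlog (θ x) hθ0 hθM
  linarith

lemma HasDerivWithinAt.eventually_mul_sub_lt_sub_nhdsGT {f : ℝ → ℝ} {a d c : ℝ}
    (hf : HasDerivWithinAt f d (Ioi a) a) (hc : c < d) :
    ∀ᶠ x in 𝓝[>] a, c * (x - a) < f x - f a := by
  have hslope := (hasDerivWithinAt_iff_tendsto_slope' self_notMem_Ioi).1 hf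
  filter_upwards [hslope.eventually (eventually_gt_nhds hc), self_mem_nhdsWithin]
    with x hx (hax : a < x)
  rwa [slope_def_field, lt_div_iff₀ (sub_pos.2 hax)] at hx

lemma HasDerivWithinAt.eventually_mul_sub_lt_sub_nhdsLT {f : ℝ → ℝ} {a d c : ℝ}
    (hf : HasDerivWithinAt f d (Iio a) a) (hc : d < c) :
    ∀ᶠ x in 𝓝[<] a, c * (x - a) < f x - f a := by
  have hslope := (hasDerivWithinAt_iff_tendsto_slope' self_notMem_Iio).1 hf
  filter_upwards [hslope.eventually (eventually_lt_nhds hc), self_mem_nhdsWithin]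
    with x hx (hxa : x < a)
  rwa [slope_def_field, div_lt_iff_of_neg (sub_neg.2 hxa)] at hx

lemma deriv_eq_zero_of_notMem {𝕜 F : Type*} [NontriviallyNormedField 𝕜] [NormedAddCommGroup F]
    [NormedSpace 𝕜 F] {f : 𝕜 → F} {s : Set 𝕜} (hs : IsClosed s) (hf : ∀ x ∉ s, f x = 0)
    {x : 𝕜} (hx : x ∉ s) : deriv f x = 0 :=
  ((eventuallyEq_of_mem (hs.isOpen_compl.mem_nhds hx) hf).deriv_eq (f := fun _ => 0)).trans
    (deriv_const x 0)

lemma eq_zero_of_notMem_Ioo {E : Type*} [Zero E] {f : ℝ → E} {a b x : ℝ} (hab : a ≤ b)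
    (hf : ∀ x ∉ Icc a b, f x = 0) (ha : f a = 0) (hb : f b = 0) (hx : x ∉ Ioo a b) : f x = 0 := by
  by_cases hxI : x ∈ Icc a b
  · have hx' : x ∈ ({a, b} : Set ℝ) := Icc_sdiff_Ioo_same hab ▸ ⟨hxI, hx⟩
    rcases hx' with rfl | rfl
    exacts [ha, hb]
  · exact hf x hxI

lemma hasDerivWithinAt_deriv_deriv_of_contDiffOn {𝕜 F : Type*} [NontriviallyNormedField 𝕜]
    [NormedAddCommGroup F] [NormedSpace 𝕜 F] {f : 𝕜 → F} {s : Set 𝕜} {x : 𝕜}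
    (hC2 : ContDiff 𝕜 2 f) (hC3 : ContDiffOn 𝕜 3 f s) (hs : UniqueDiffOn 𝕜 s) (hx : x ∈ s) :
    HasDerivWithinAt (deriv (deriv f)) (iteratedDerivWithin 3 f s x) s x := by
  have heq : EqOn (iteratedDerivWithin 2 f s) (deriv (deriv f)) s := fun y hy => by
    rw [iteratedDerivWithin_eq_iteratedDeriv hs hC2.contDiffAt hy, iteratedDeriv_succ,
      iteratedDeriv_one]
  rw [iteratedDerivWithin_succ]
  exact ((hC3.differentiableOn_iteratedDerivWithin (by norm_num) hs x hx).hasDerivWithinAt.congr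
    heq.symm (heq hx).symm)

lemma Convex.norm_image_le_mul_sq_of_deriv_eq_zero {E : Type*} [NormedAddCommGroup E]
    [NormedSpace ℝ E] {f : ℝ → E} {s : Set ℝ} {a x M : ℝ} (hs : Convex ℝ s)
    (hf : Differentiable ℝ f) (hf' : Differentiable ℝ (deriv f))
    (hM : ∀ y ∈ s, ‖deriv (deriv f) y‖ ≤ M) (ha : a ∈ s) (hx : x ∈ s)
    (hfa : f a = 0) (hf'a : deriv f a = 0) : ‖f x‖ ≤ M * (x - a) ^ 2 := by
  have hM0 : 0 ≤ M := (norm_nonneg _).trans (hM a ha)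
  have hderiv : ∀ y ∈ segment ℝ a x, ‖deriv f y‖ ≤ M * |x - a| := fun y hy => by
    have := hs.norm_image_sub_le_of_norm_deriv_le (fun z _ => hf' z) hM ha
      (hs.segment_subset ha hx hy)
    rw [hf'a, sub_zero, Real.norm_eq_abs (y - a)] at this
    rw [segment_eq_uIcc] at hy
    exact this.trans (mul_le_mul_of_nonneg_left (abs_sub_left_of_mem_uIcc hy) hM0)
  have := (convex_segment a x).norm_image_sub_le_of_norm_deriv_le (fun z _ => hf z) hderiv
    (left_mem_segment ℝ a x) (right_mem_segment ℝ a x)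
  rw [hfa, sub_zero, Real.norm_eq_abs] at this
  nlinarith [sq_abs (x - a)]

lemma IsCompact.exists_forall_nonneg_add_mul_log_mul {X : Type*} [TopologicalSpace X]
    {S : Set X} {g θ : X → ℝ} {c : ℝ} (hS : IsCompact S) (hc : 0 < c) (hg : ContinuousOn g S)
    (hθc : ContinuousOn θ S) (hθS : ∀ x ∈ S, 0 < θ x) (hθ : ∀ x, 0 ≤ θ x)
    (hgS : ∀ x ∉ S, 0 ≤ g x) :
    ∃ K₀ > (1 : ℝ), ∀ K ≥ K₀, ∀ x, 0 ≤ g x + c * log K * θ x := by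
  obtain ⟨m, hm, hθm⟩ := hS.exists_forall_le' hθc hθS
  obtain ⟨C, hC⟩ := hS.exists_bound_of_continuousOn hg
  refine ⟨max 2 (exp (C / (c * m))), lt_max_of_lt_left one_lt_two, fun K hK x => ?_⟩
  have hK2 : 2 ≤ K := (le_max_left _ _).trans hK
  have hK0 : 0 < K := by linarith
  have hlogK0 : 0 ≤ log K := log_nonneg (by linarith)
  by_cases hx : x ∈ S
  · have hlogK : C / (c * m) ≤ log K := (le_log_iff_exp_le hK0).2 ((le_max_right _ _).trans hK)
    have hCx := (abs_le.1 (Real.norm_eq_abs _ ▸ hC x hx)).1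
    have : C ≤ c * log K * θ x := calc
      C = c * (C / (c * m)) * m := by field_simp
      _ ≤ c * log K * θ x := by gcongr; exact hθm x hx
    linarith
  · have := hgS x hx
    have := hθ x
    positivity

/-- Since `Real.log 0 = 0`, the convention `u ln u = 0` at `u = 0` is built in. -/
noncomputable def logDiffusionOp (lam : ℝ) (Θ : ℝ → ℝ) (x : ℝ) : ℝ :=
  deriv (deriv Θ) x + 2 * lam * (Θ x * log (Θ x))

lemma continuous_logDiffusionOp (lam : ℝ) {Θ : ℝ → ℝ} (hC2 : ContDiff ℝ 2 Θ) :
    Continuous (logDiffusionOp lam Θ) :=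
  (hC2.iterate_deriv' 0 2).continuous.add
    (continuous_const.mul (continuous_mul_log.comp hC2.continuous))

lemma mul_deriv_deriv_add_mul_log_eq (lam : ℝ) {K : ℝ} (hK : K ≠ 0) (Θ : ℝ → ℝ) (x : ℝ) :
    K * deriv (deriv Θ) x + 2 * lam * (K * Θ x) * log (K * Θ x) =
      K * (logDiffusionOp lam Θ x + 2 * lam * log K * Θ x) := by
  rw [logDiffusionOp]
  rcases eq_or_ne (Θ x) 0 with hΘ | hΘ
  · simp [hΘ]
  rw [log_mul hK hΘ]; ring

section Profile

variable {a b lam γ : ℝ} {Θ : ℝ → ℝ}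

lemma eventually_nonneg_logDiffusionOp_nhdsGT (hlam : 0 < lam) (hγ : 0 < γ) (hab : a < b)
    (hC2 : ContDiff ℝ 2 Θ) (hC3 : ContDiffOn ℝ 3 Θ (Icc a b)) (hnonneg : ∀ x, 0 ≤ Θ x)
    (hΘ : Θ a = 0) (hΘ' : deriv Θ a = 0) (hΘ'' : deriv (deriv Θ) a = 0)
    (hΘ''' : iteratedDerivWithin 3 Θ (Icc a b) a = γ) :
    ∀ᶠ x in 𝓝[>] a, 0 ≤ logDiffusionOp lam Θ x := by
  have ha : a ∈ Icc a b := left_mem_Icc.2 hab.le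
  obtain ⟨M, hM⟩ := isCompact_Icc.exists_bound_of_continuousOn (s := Icc a b)
    (hC2.iterate_deriv' 0 2).continuous.continuousOn
  have hIcc : Icc a b ∈ 𝓝[>] a := mem_of_superset (Ioo_mem_nhdsGT hab) Ioo_subset_Icc_self
  have hderiv : HasDerivWithinAt (deriv (deriv Θ)) γ (Ioi a) a := by
    rw [← hΘ''']
    exact (hasDerivWithinAt_deriv_deriv_of_contDiffOn hC2 hC3 (uniqueDiffOn_Icc hab)
      ha).mono_of_mem_nhdsWithin hIcc
  refine eventually_nonneg_add_mul_log (t := fun x => x - a) (by positivity) (half_pos hγ)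
    ((norm_nonneg _).trans (hM a ha)) ?_ ?_ ?_ ?_
  · exact ((continuous_sub_right a).tendsto' a 0 (sub_self a)).mono_left nhdsWithin_le_nhds
  · filter_upwards [self_mem_nhdsWithin] with x (hx : a < x) using sub_pos.2 hx
  · filter_upwards [hderiv.eventually_mul_sub_lt_sub_nhdsGT (half_lt_self hγ)] with x hx
    rw [hΘ'', sub_zero] at hx
    exact hx.le
  · filter_upwards [hIcc] with x hx
    refine ⟨hnonneg x, (le_abs_self _).trans ?_⟩
    exact (convex_Icc a b).norm_image_le_mul_sq_of_deriv_eq_zero (hC2.differentiable two_ne_zero)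
      hC2.differentiable_deriv_two hM ha hx hΘ hΘ'

lemma eventually_nonneg_logDiffusionOp_nhdsLT (hlam : 0 < lam) (hγ : 0 < γ) (hab : a < b)
    (hC2 : ContDiff ℝ 2 Θ) (hC3 : ContDiffOn ℝ 3 Θ (Icc a b)) (hnonneg : ∀ x, 0 ≤ Θ x)
    (hΘ : Θ b = 0) (hΘ' : deriv Θ b = 0) (hΘ'' : deriv (deriv Θ) b = 0)
    (hΘ''' : iteratedDerivWithin 3 Θ (Icc a b) b = -γ) :
    ∀ᶠ x in 𝓝[<] b, 0 ≤ logDiffusionOp lam Θ x := by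
  have hb : b ∈ Icc a b := right_mem_Icc.2 hab.le
  obtain ⟨M, hM⟩ := isCompact_Icc.exists_bound_of_continuousOn (s := Icc a b)
    (hC2.iterate_deriv' 0 2).continuous.continuousOn
  have hIcc : Icc a b ∈ 𝓝[<] b := Icc_mem_nhdsLT hab
  have hderiv : HasDerivWithinAt (deriv (deriv Θ)) (-γ) (Iio b) b := by
    rw [← hΘ''']
    exact (hasDerivWithinAt_deriv_deriv_of_contDiffOn hC2 hC3 (uniqueDiffOn_Icc hab)
      hb).mono_of_mem_nhdsWithin hIcc
  refine eventually_nonneg_add_mul_log (t := fun x => b - x) (by positivity) (half_pos hγ)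
    ((norm_nonneg _).trans (hM b hb)) ?_ ?_ ?_ ?_
  · exact ((continuous_sub_left b).tendsto' b 0 (sub_self b)).mono_left nhdsWithin_le_nhds
  · filter_upwards [self_mem_nhdsWithin] with x (hx : x < b) using sub_pos.2 hx
  · filter_upwards [hderiv.eventually_mul_sub_lt_sub_nhdsLT (neg_lt_neg (half_lt_self hγ))]
      with x hx
    rw [hΘ'', sub_zero] at hx
    linarith
  · filter_upwards [hIcc] with x hx
    refine ⟨hnonneg x, (le_abs_self _).trans ?_⟩
    rw [← neg_sub, neg_sq]
    exact (convex_Icc a b).norm_image_le_mul_sq_of_deriv_eq_zero (hC2.differentiable two_ne_zero)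
      hC2.differentiable_deriv_two hM hb hx hΘ hΘ'

lemma exists_Icc_subset_Ioo_logDiffusionOp_nonneg_outside (hlam : 0 < lam) (hγ : 0 < γ)
    (hab : a < b) (hC2 : ContDiff ℝ 2 Θ) (hC3 : ContDiffOn ℝ 3 Θ (Icc a b))
    (hsupp : ∀ x, x ∉ Icc a b → Θ x = 0) (hnonneg : ∀ x, 0 ≤ Θ x)
    (hΘ : Θ a = 0 ∧ Θ b = 0) (hΘ' : deriv Θ a = 0 ∧ deriv Θ b = 0)
    (hΘ'' : deriv (deriv Θ) a = 0 ∧ deriv (deriv Θ) b = 0)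
    (hΘ''' : iteratedDerivWithin 3 Θ (Icc a b) a = γ ∧
      iteratedDerivWithin 3 Θ (Icc a b) b = -γ) :
    ∃ u v, Icc u v ⊆ Ioo a b ∧ ∀ x ∉ Icc u v, 0 ≤ logDiffusionOp lam Θ x := by
  obtain ⟨u, hu, hleft⟩ := mem_nhdsGT_iff_exists_Ioo_subset.1 <|
    eventually_nonneg_logDiffusionOp_nhdsGT hlam hγ hab hC2 hC3 hnonneg hΘ.1 hΘ'.1 hΘ''.1
      hΘ'''.1
  obtain ⟨v, hv, hright⟩ := mem_nhdsLT_iff_exists_Ioo_subset.1 <|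
    eventually_nonneg_logDiffusionOp_nhdsLT hlam hγ hab hC2 hC3 hnonneg hΘ.2 hΘ'.2 hΘ''.2
      hΘ'''.2
  refine ⟨u, v, Icc_subset_Ioo hu hv, fun x hx => ?_⟩
  by_cases hxI : x ∈ Ioo a b
  · rcases not_and_or.1 hx with hxu | hvx
    exacts [hleft ⟨hxI.1, not_le.1 hxu⟩, hright ⟨not_le.1 hvx, hxI.2⟩]
  have hsupp'' : ∀ y ∉ Icc a b, deriv (deriv Θ) y = 0 := fun _ =>
    deriv_eq_zero_of_notMem isClosed_Icc fun _ => deriv_eq_zero_of_notMem isClosed_Icc hsupp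
  simp [logDiffusionOp, eq_zero_of_notMem_Ioo hab.le hsupp hΘ.1 hΘ.2 hxI,
    eq_zero_of_notMem_Ioo hab.le hsupp'' hΘ''.1 hΘ''.2 hxI]

end Profile

theorem plateau_subsolution_general (lam L γ : ℝ) (hlam : 0 < lam) (hL : 0 < L)
    (hγ : 0 < γ)
    (Θ : ℝ → ℝ) (hC2 : ContDiff ℝ 2 Θ)
    (hC3 : ContDiffOn ℝ 3 Θ (Set.Icc (-L) L))
    (hsupp : ∀ x, x ∉ Set.Icc (-L) L → Θ x = 0)
    (hpos : ∀ x ∈ Set.Ioo (-L) L, 0 < Θ x)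
    (hΘL : Θ (-L) = 0 ∧ Θ L = 0)
    (hΘ'L : deriv Θ (-L) = 0 ∧ deriv Θ L = 0)
    (hΘ''L : deriv (deriv Θ) (-L) = 0 ∧ deriv (deriv Θ) L = 0)
    (hΘ'''L : iteratedDerivWithin 3 Θ (Set.Icc (-L) L) (-L) = γ ∧
        iteratedDerivWithin 3 Θ (Set.Icc (-L) L) L = -γ) :
    ∃ K₀ > (1:ℝ), ∀ K ≥ K₀, ∀ x : ℝ,
      0 ≤ K * deriv (deriv Θ) x + 2 * lam * (K * Θ x) * Real.log (K * Θ x) := by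
  have hLL : -L < L := by linarith
  have hnonneg : ∀ x, 0 ≤ Θ x := fun x => by
    by_cases hx : x ∈ Ioo (-L) L
    exacts [(hpos x hx).le, (eq_zero_of_notMem_Ioo hLL.le hsupp hΘL.1 hΘL.2 hx).ge]
  obtain ⟨u, v, hIcc, hout⟩ := exists_Icc_subset_Ioo_logDiffusionOp_nonneg_outside hlam hγ hLL
    hC2 hC3 hsupp hnonneg hΘL hΘ'L hΘ''L hΘ'''L
  obtain ⟨K₀, hK₀, hK⟩ := isCompact_Icc.exists_forall_nonneg_add_mul_log_mul (c := 2 * lam)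
    (by positivity) (continuous_logDiffusionOp lam hC2).continuousOn hC2.continuous.continuousOn
    (fun x hx => hpos x (hIcc hx)) hnonneg hout
  refine ⟨K₀, hK₀, fun K hK' x => ?_⟩
  have hK0 : 0 < K := by linarith
  rw [mul_deriv_deriv_add_mul_log_eq lam hK0.ne']
  exact mul_nonneg hK0.le (hK K hK' x)

theorem plateau_subsolution (lam L ε γ : ℝ) (hlam : 0 < lam) (hL : 0 < L)
    (hε : 0 < ε) (hεL : ε < L) (hγ : 0 < γ)
    (Θ : ℝ → ℝ) (hC2 : ContDiff ℝ 2 Θ)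
    (hC3 : ContDiffOn ℝ 3 Θ (Set.Icc (-L) L))
    (hsupp : ∀ x, x ∉ Set.Icc (-L) L → Θ x = 0)
    (hpos : ∀ x ∈ Set.Ioo (-L) L, 0 < Θ x)
    (hΘL : Θ (-L) = 0 ∧ Θ L = 0)
    (hΘ'L : deriv Θ (-L) = 0 ∧ deriv Θ L = 0)
    (hΘ''L : deriv (deriv Θ) (-L) = 0 ∧ deriv (deriv Θ) L = 0)
    (hΘ'''L : iteratedDerivWithin 3 Θ (Set.Icc (-L) L) (-L) = γ ∧
        iteratedDerivWithin 3 Θ (Set.Icc (-L) L) L = -γ)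
    (hplateau : ∀ x ∈ Set.Icc (-L + ε) (L - ε), Θ x = 1) :
    ∃ K₀ > (1:ℝ), ∀ K ≥ K₀, ∀ x : ℝ,
      0 ≤ K * deriv (deriv Θ) x + 2 * lam * (K * Θ x) * Real.log (K * Θ x) :=
  plateau_subsolution_general lam L γ hlam hL hγ Θ hC2 hC3 hsupp hpos hΘL hΘ'L hΘ''L hΘ'''L
end
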